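/- arXiv:2511.10541 — 3 statements merged into one kernel-verified Lean document; each statement's English description precedes it below -/
import Mathlib

section
/- Let K ⊆ ℝ^d be a compact set, not a singleton, that is uniformly disconnected with constant λ > 0, and let g₀ : [0,1] → ℝ^d be a Lipschitz capture of K with image G₀ = g₀([0,1]). Then for every pair of distinct points x, y ∈ K, for each a ∈ g₀^{-1}({x}) and b ∈ g₀^{-1}({y}), there exist s, t ∈ g₀^{-1}(K) with s < t such that the open interval (s,t) is contained in (min{a,b}, max{a,b}) and is disjoint from g₀^{-1}(K), and such that there is a value ζ ∈ (s,t) with dist(g₀(ζ), K) > (1/4)λ|x − y| and with g₀(ζ) a point of H¹-density 1 of G₀. -/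
open Set Metric Filter MeasureTheory

noncomputable section

/-- `ℝ^d` with the Euclidean metric. -/
abbrev Euc (d : ℕ) := EuclideanSpace ℝ (Fin d)

/-- The excess of `A` over `B`: `sup_{a ∈ A} inf_{b ∈ B} |a - b|`
(with the convention that it is `0` when `A = ∅`). -/
noncomputable def exc {d : ℕ} (A B : Set (Euc d)) : ℝ :=
  sSup ((fun a => sInf ((fun b => dist a b) '' B)) '' A)

/-- Attouch–Wets convergence of a sequence of sets to a set. -/
def AWTendsto {d : ℕ} (X : ℕ → Set (Euc d)) (L : Set (Euc d)) : Prop :=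
  ∀ r : ℝ, 0 < r →
    Tendsto (fun i => exc (X i ∩ closedBall 0 r) L) atTop (nhds 0) ∧
    Tendsto (fun i => exc (L ∩ closedBall 0 r) (X i)) atTop (nhds 0)

/-- `S` is a pseudotangent to `K` at `x`: `S` is a nonempty closed set which is an
Attouch–Wets limit of `(1/rᵢ)(K - xᵢ)` for some positive scales `rᵢ → 0` and points
`xᵢ ∈ K`, `xᵢ → x`. -/
def IsPseudotangent {d : ℕ} (K : Set (Euc d)) (x : Euc d) (S : Set (Euc d)) : Prop :=
  S.Nonempty ∧ IsClosed S ∧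
    ∃ (r : ℕ → ℝ) (y : ℕ → Euc d),
      (∀ i, 0 < r i) ∧ Tendsto r atTop (nhds 0) ∧
      (∀ i, y i ∈ K) ∧ Tendsto y atTop (nhds x) ∧
      AWTendsto (fun i => (fun z => (r i)⁻¹ • (z - y i)) '' K) S

/-- `Ψ-Tan(K, x)`, the collection of pseudotangents to `K` at `x`. -/
def pseudoTangents {d : ℕ} (K : Set (Euc d)) (x : Euc d) : Set (Set (Euc d)) :=
  {S | IsPseudotangent K x S}

/-- `T` is a tangent to `K` at `x`: `T` is a nonempty closed set which is an
Attouch–Wets limit of `(1/rᵢ)(K - x)` for some positive scales `rᵢ → 0`. -/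
def IsTangent {d : ℕ} (K : Set (Euc d)) (x : Euc d) (T : Set (Euc d)) : Prop :=
  T.Nonempty ∧ IsClosed T ∧
    ∃ r : ℕ → ℝ,
      (∀ i, 0 < r i) ∧ Tendsto r atTop (nhds 0) ∧
      AWTendsto (fun i => (fun z => (r i)⁻¹ • (z - x)) '' K) T

/-- `Tan(K, x)`, the collection of tangents to `K` at `x`. -/
def tangents {d : ℕ} (K : Set (Euc d)) (x : Euc d) : Set (Set (Euc d)) :=
  {T | IsTangent K x T}

/-- `C_U(ℝ^d; 0)`: closed subsets of `ℝ^d` containing the origin, all of whose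
connected components are unbounded. -/
def CU (d : ℕ) : Set (Set (Euc d)) :=
  {S | IsClosed S ∧ (0 : Euc d) ∈ S ∧
    ∀ z ∈ S, ¬ Bornology.IsBounded (connectedComponentIn S z)}

/-- `K` is uniformly disconnected with constant `lam > 0`: for all distinct `x, y ∈ K`
and every finite chain `p 0 = x, …, p n = y` of points of `K`, some consecutive pair of
chain points is at distance greater than `lam * |x - y|`. -/
def UniformlyDisconnectedWith {d : ℕ} (K : Set (Euc d)) (lam : ℝ) : Prop :=
  ∀ x ∈ K, ∀ y ∈ K, x ≠ y →
    ∀ (n : ℕ) (p : ℕ → Euc d), (∀ i ≤ n, p i ∈ K) → p 0 = x → p n = y →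
      ∃ i < n, lam * dist x y < dist (p (i + 1)) (p i)

/-- `K` is uniformly disconnected. -/
def UniformlyDisconnected {d : ℕ} (K : Set (Euc d)) : Prop :=
  ∃ lam > 0, UniformlyDisconnectedWith K lam

/-- `f : [0,1] → ℝ^d` is a Lipschitz capture of `K`: `f` is Lipschitz on `[0,1]` and
`K ⊆ f([0,1])`. -/
def IsLipschitzCapture {d : ℕ} (f : ℝ → Euc d) (K : Set (Euc d)) : Prop :=
  (∃ L : NNReal, LipschitzOnWith L f (Icc 0 1)) ∧ K ⊆ f '' Icc (0 : ℝ) 1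

/-- `z` is a point of `H¹`-density `1` of `G`:
`H¹(G ∩ B̄(z,r)) / (2r) → 1` as `r → 0⁺`. -/
def H1DensityOne {d : ℕ} (G : Set (Euc d)) (z : Euc d) : Prop :=
  Tendsto (fun r : ℝ => (μH[1] (G ∩ closedBall z r)).toReal / (2 * r))
    (nhdsWithin 0 (Ioi 0)) (nhds 1)

open scoped ENNReal NNReal Topology

set_option maxHeartbeats 1000000

/-- Extract a small-diameter, small-total-diameter countable cover of an `H¹`-null set. -/
lemma exists_cover_of_H1_null {X : Type*} [EMetricSpace X] [MeasurableSpace X] [BorelSpace X]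
    {s : Set X} (h : μH[1] s = 0) {r : ℝ≥0∞} (hr : 0 < r) {δ : ℝ≥0∞} (hδ : 0 < δ) :
    ∃ t : ℕ → Set X, (s ⊆ ⋃ n, t n) ∧ (∀ n, EMetric.diam (t n) ≤ r) ∧
      ∑' n, EMetric.diam (t n) ^ (1 : ℝ) ≤ δ := by
  have H := MeasureTheory.Measure.hausdorffMeasure_apply 1 s
  rw [h] at H
  have H2 : (⨅ (t : ℕ → Set X) (_ : s ⊆ ⋃ n, t n) (_ : ∀ n, EMetric.diam (t n) ≤ r),
      ∑' n, ⨆ _ : (t n).Nonempty, EMetric.diam (t n) ^ (1:ℝ)) ≤ 0 := by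
    rw [H]
    exact le_iSup₂ (f := fun (r : ℝ≥0∞) (_ : 0 < r) =>
      ⨅ (t : ℕ → Set X) (_ : s ⊆ ⋃ n, t n) (_ : ∀ n, EMetric.diam (t n) ≤ r),
        ∑' n, ⨆ _ : (t n).Nonempty, EMetric.diam (t n) ^ (1:ℝ)) r hr
  have H3 : (⨅ (t : ℕ → Set X) (_ : s ⊆ ⋃ n, t n) (_ : ∀ n, EMetric.diam (t n) ≤ r),
      ∑' n, ⨆ _ : (t n).Nonempty, EMetric.diam (t n) ^ (1:ℝ)) < δ := lt_of_le_of_lt H2 hδ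
  rw [iInf_lt_iff] at H3
  obtain ⟨t, ht⟩ := H3
  rw [iInf_lt_iff] at ht
  obtain ⟨hcov, ht⟩ := ht
  rw [iInf_lt_iff] at ht
  obtain ⟨hdiam, ht⟩ := ht
  refine ⟨t, hcov, hdiam, le_trans (le_of_eq ?_) ht.le⟩
  refine tsum_congr fun n => ?_
  rcases eq_empty_or_nonempty (t n) with he | hne
  · simp [he, ENNReal.zero_rpow_of_pos, zero_lt_one]
    exact Metric.ediam_empty
  · simp [hne]

/-- Lower density bound at a point where the parametrization has a nonzero derivative. -/
lemma lower_density {d : ℕ} {g : ℝ → Euc d} (hgc : Continuous g) {ζ : ℝ}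
    {v : Euc d} (hdiff : HasDerivAt g v ζ) (hv : v ≠ 0) {ε : ℝ} (hε : 0 < ε) :
    ∀ᶠ r in 𝓝[>] (0:ℝ),
      ENNReal.ofReal ((1 - ε) * (2 * r)) ≤ μH[1] (range g ∩ closedBall (g ζ) r) := by
  set z := g ζ with hz
  set ε' := min (1/2 : ℝ) (ε/2) with hε'
  have hε'pos : 0 < ε' := lt_min (by norm_num) (by linarith)
  have hε'half : ε' ≤ 1/2 := min_le_left _ _
  have hε'ε : ε' ≤ ε/2 := min_le_right _ _
  have hvn : 0 < ‖v‖ := norm_pos_iff.2 hv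
  have h1 : (fun x => g x - z - (x - ζ) • v) =o[nhds ζ] fun x => x - ζ :=
    hasDerivAt_iff_isLittleO.1 hdiff
  have h2 := h1.def (show 0 < ε' * ‖v‖ by positivity)
  rw [Metric.eventually_nhds_iff] at h2
  obtain ⟨δ, hδpos, hδ⟩ := h2
  filter_upwards [Ioo_mem_nhdsGT
    (show (0:ℝ) < δ * ‖v‖ / 2 by positivity)] with r hr
  obtain ⟨hr0, hrδ⟩ := hr
  set h := r * (1 - ε') / ‖v‖ with hh
  have h1ε' : (0:ℝ) < 1 - ε' := by linarith
  have hhpos : 0 < h := div_pos (mul_pos hr0 h1ε') hvn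
  have hhv : h * ‖v‖ = r * (1 - ε') := div_mul_cancel₀ _ hvn.ne'
  have hhδ : h < δ := by
    rw [hh, div_lt_iff₀ hvn]
    nlinarith [hrδ, hr0, hε'pos]
  have herr : ∀ x : ℝ, |x - ζ| ≤ h → ‖g x - z - (x - ζ) • v‖ ≤ ε' * ‖v‖ * |x - ζ| := by
    intro x hx
    have : dist x ζ < δ := by rw [Real.dist_eq]; exact lt_of_le_of_lt hx hhδ
    simpa [Real.norm_eq_abs] using hδ this
  have hball : ∀ x ∈ Icc (ζ - h) (ζ + h), g x ∈ closedBall z r := by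
    intro x hx
    have habs : |x - ζ| ≤ h := by
      rw [abs_le]; constructor <;> [linarith [hx.1]; linarith [hx.2]]
    have e1 := herr x habs
    have e2 : ‖g x - z‖ ≤ ‖g x - z - (x - ζ) • v‖ + ‖(x - ζ) • v‖ := by
      have := norm_add_le (g x - z - (x - ζ) • v) ((x - ζ) • v)
      simpa using this
    have e3 : ‖(x - ζ) • v‖ = |x - ζ| * ‖v‖ := by rw [norm_smul, Real.norm_eq_abs]
    have e5 : ε' * ‖v‖ * |x - ζ| ≤ ε' * ‖v‖ * h := mul_le_mul_of_nonneg_left habs (by positivity)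
    have e6 : |x - ζ| * ‖v‖ ≤ h * ‖v‖ := mul_le_mul_of_nonneg_right habs hvn.le
    have e4 : ‖g x - z‖ ≤ (1 + ε') * (h * ‖v‖) := by
      rw [e3] at e2
      nlinarith [e1, e2, e5, e6]
    rw [mem_closedBall, dist_eq_norm]
    rw [hhv] at e4
    nlinarith [e4, mul_nonneg hr0.le (mul_nonneg hε'pos.le hε'pos.le)]
  set u : Euc d := ‖v‖⁻¹ • v with hu_def
  have hu : ‖u‖ = 1 := norm_smul_inv_norm hv
  set π : Euc d → ℝ := fun w => (inner ℝ (w - z) u : ℝ) with hπ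
  have hπlip : LipschitzWith 1 π := by
    apply LipschitzWith.of_dist_le_mul
    intro w w'
    have e : π w - π w' = (inner ℝ (w - w') u : ℝ) := by
      rw [show w - w' = (w - z) - (w' - z) by abel, inner_sub_left]
    rw [Real.dist_eq, e]
    calc |(inner ℝ (w - w') u : ℝ)| ≤ ‖w - w'‖ * ‖u‖ := abs_real_inner_le_norm _ _
      _ = 1 * dist w w' := by rw [hu, dist_eq_norm]; ring
  have hπv : (inner ℝ v u : ℝ) = ‖v‖ := by
    rw [hu_def, real_inner_smul_right, real_inner_self_eq_norm_mul_norm]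
    field_simp
  have hπsmul : ∀ c : ℝ, (inner ℝ (c • v) u : ℝ) = c * ‖v‖ := by
    intro c; rw [real_inner_smul_left, hπv]
  have hkey : ∀ x : ℝ, |x - ζ| ≤ h → |π (g x) - (x - ζ) * ‖v‖| ≤ ε' * ‖v‖ * h := by
    intro x hx
    have e1 := herr x hx
    have e2 : π (g x) - (x - ζ) * ‖v‖ = (inner ℝ (g x - z - (x - ζ) • v) u : ℝ) := by
      rw [show (inner ℝ (g x - z - (x - ζ) • v) u : ℝ)
            = (inner ℝ (g x - z) u : ℝ) - (inner ℝ ((x - ζ) • v) u : ℝ) from inner_sub_left _ _ _,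
        hπsmul]
    rw [e2]
    calc |(inner ℝ (g x - z - (x - ζ) • v) u : ℝ)| ≤ ‖g x - z - (x - ζ) • v‖ * ‖u‖ :=
          abs_real_inner_le_norm _ _
      _ ≤ ε' * ‖v‖ * h := by
          rw [hu, mul_one]
          exact e1.trans (mul_le_mul_of_nonneg_left hx (by positivity))
  set A := r * ((1 - ε') * (1 - ε')) with hA
  have hApos : 0 < A := by positivity
  have hplus : A ≤ π (g (ζ + h)) := by
    have := hkey (ζ + h) (by rw [show ζ + h - ζ = h by ring, abs_of_pos hhpos])
    rw [show ζ + h - ζ = h by ring] at this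
    have := abs_le.1 this
    nlinarith [hhv, this.1, hε'pos, hvn]
  have hminus : π (g (ζ - h)) ≤ -A := by
    have := hkey (ζ - h) (by rw [show ζ - h - ζ = -h by ring, abs_neg, abs_of_pos hhpos])
    rw [show ζ - h - ζ = -h by ring] at this
    have := abs_le.1 this
    nlinarith [hhv, this.2, hε'pos, hvn]
  set S := (π ∘ g) '' Icc (ζ - h) (ζ + h) with hS
  have hSconn : IsPreconnected S :=
    isPreconnected_Icc.image _ ((hπlip.continuous.comp hgc).continuousOn)
  have hmem1 : π (g (ζ - h)) ∈ S := mem_image_of_mem _ ⟨le_refl _, by linarith⟩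
  have hmem2 : π (g (ζ + h)) ∈ S := mem_image_of_mem _ ⟨by linarith, le_refl _⟩
  have hIccS : Icc (-A) A ⊆ S := fun c hc =>
    hSconn.Icc_subset hmem1 hmem2 (Icc_subset_Icc hminus hplus hc)
  have hSsub : S ⊆ π '' (range g ∩ closedBall z r) := by
    rintro - ⟨x, hx, rfl⟩
    exact ⟨g x, ⟨mem_range_self _, hball x hx⟩, rfl⟩
  calc ENNReal.ofReal ((1 - ε) * (2 * r))
      ≤ ENNReal.ofReal (A - (-A)) := by
        apply ENNReal.ofReal_le_ofReal
        nlinarith [mul_nonneg hr0.le (mul_nonneg hε'pos.le hε'pos.le),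
          mul_nonneg hr0.le (show (0:ℝ) ≤ ε - 2*ε' by linarith)]
    _ = volume (Icc (-A) A) := (Real.volume_Icc).symm
    _ = μH[1] (Icc (-A) A) := by rw [MeasureTheory.hausdorffMeasure_real]
    _ ≤ μH[1] S := measure_mono hIccS
    _ ≤ μH[1] (π '' (range g ∩ closedBall z r)) := measure_mono hSsub
    _ ≤ (1:ℝ≥0) ^ (1:ℝ) * μH[1] (range g ∩ closedBall z r) :=
        hπlip.hausdorffMeasure_image_le (by norm_num) _
    _ = μH[1] (range g ∩ closedBall z r) := by simp

/-- The image of `[0,1]` points where `g` has zero derivative is `H¹`-null. -/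
lemma image_zero_deriv_null {d : ℕ} {g : ℝ → Euc d} :
    μH[1] (g '' {u ∈ Icc (0:ℝ) 1 | DifferentiableAt ℝ g u ∧ deriv g u = 0}) = 0 := by
  set Z := {u ∈ Icc (0:ℝ) 1 | DifferentiableAt ℝ g u ∧ deriv g u = 0} with hZ
  rw [← nonpos_iff_eq_zero]
  have main : ∀ ε : ℝ, 0 < ε → μH[1] (g '' Z) ≤ ENNReal.ofReal ε := by
    intro ε hε
    set Zn : ℕ → Set ℝ := fun n =>
      {u ∈ Z | ∀ h : ℝ, |h| ≤ 1/(n+1) → ‖g (u+h) - g u‖ ≤ ε * |h|} with hZn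
    have hZnmono : Monotone Zn := by
      intro n m hnm u hu
      refine ⟨hu.1, fun h hh => hu.2 h (hh.trans ?_)⟩
      apply one_div_le_one_div_of_le (by positivity)
      exact_mod_cast by exact_mod_cast add_le_add_left (Nat.cast_le.2 hnm) 1
    have hZcover : Z = ⋃ n, Zn n := by
      apply Subset.antisymm
      · intro u hu
        have hd : HasDerivAt g 0 u := hu.2.2 ▸ hu.2.1.hasDerivAt
        have h1 : (fun x => g x - g u - (x - u) • (0:Euc d)) =o[nhds u] fun x => x - u :=
          hasDerivAt_iff_isLittleO.1 hd
        have h2 := h1.def hε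
        rw [Metric.eventually_nhds_iff] at h2
        obtain ⟨δ, hδpos, hδ⟩ := h2
        obtain ⟨n, hn⟩ := exists_nat_one_div_lt hδpos
        refine mem_iUnion.2 ⟨n, hu, fun h hh => ?_⟩
        have : dist (u + h) u < δ := by
          rw [Real.dist_eq, show u + h - u = h by ring]
          exact lt_of_le_of_lt hh hn
        have := hδ this
        simpa [Real.norm_eq_abs, show u + h - u = h by ring] using this
      · exact iUnion_subset fun n => fun u hu => hu.1
    rw [hZcover, image_iUnion, Monotone.measure_iUnion (fun n m h => image_mono (hZnmono h))]
    refine iSup_le fun n => ?_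
    -- cover [0,1] by n+1 intervals of length 1/(n+1)
    have hIcov : Icc (0:ℝ) 1 ⊆ ⋃ k : Fin (n+1), Icc (k/(n+1) : ℝ) ((k+1)/(n+1)) := by
      intro u hu
      by_cases h1 : u = 1
      · refine mem_iUnion.2 ⟨Fin.last n, ?_⟩
        subst h1
        constructor
        · apply div_le_one_of_le₀ <;> [simp [Fin.last]; positivity]
        · rw [le_div_iff₀ (by positivity : (0:ℝ) < (n:ℝ)+1)]
          simp [Fin.last]
      · have hu1 : u < 1 := lt_of_le_of_ne hu.2 h1
        have hfl : ⌊u * (n+1)⌋₊ ≤ n := by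
          have h2 : u * (n+1) < (n:ℝ)+1 := by
            nlinarith [mul_pos (sub_pos.2 hu1) (show (0:ℝ) < (n:ℝ)+1 by positivity)]
          have h3 : ⌊u * (n+1)⌋₊ < n+1 := by
            rw [Nat.floor_lt (mul_nonneg hu.1 (by positivity))]
            push_cast
            exact h2
          omega
        refine mem_iUnion.2 ⟨⟨⌊u * (n+1)⌋₊, Nat.lt_succ_of_le hfl⟩, ?_, ?_⟩
        · rw [div_le_iff₀ (by positivity : (0:ℝ) < (n:ℝ)+1)]
          exact_mod_cast Nat.floor_le (mul_nonneg hu.1 (by positivity : (0:ℝ) ≤ (n:ℝ)+1))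
        · rw [le_div_iff₀ (by positivity : (0:ℝ) < (n:ℝ)+1)]
          exact_mod_cast (Nat.lt_floor_add_one (u * (n+1))).le
    have hsplit : g '' Zn n ⊆
        ⋃ k : Fin (n+1), g '' (Zn n ∩ Icc (k/(n+1) : ℝ) ((k+1)/(n+1))) := by
      rintro - ⟨u, hu, rfl⟩
      obtain ⟨k, hk⟩ := mem_iUnion.1 (hIcov hu.1.1)
      exact mem_iUnion.2 ⟨k, mem_image_of_mem _ ⟨hu, hk⟩⟩
    refine le_trans (measure_mono hsplit) (le_trans (measure_iUnion_le _) ?_)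
    have hpiece : ∀ k : Fin (n+1),
        μH[1] (g '' (Zn n ∩ Icc (k/(n+1) : ℝ) ((k+1)/(n+1))))
          ≤ ENNReal.ofReal ε * ENNReal.ofReal (1/(n+1)) := by
      intro k
      have hlip : LipschitzOnWith (Real.toNNReal ε) g (Zn n ∩ Icc (k/(n+1):ℝ) ((k+1)/(n+1))) := by
        apply LipschitzOnWith.of_dist_le_mul
        intro p hp q hq
        have hpq : |q - p| ≤ 1/(n+1) := by
          rw [abs_le]
          constructor
          · have := hp.2.2; have := hq.2.1
            have hgap : (k:ℝ)/(n+1) - (k+1)/(n+1) = -(1/(n+1)) := by ring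
            linarith [hp.2.2, hq.2.1, hgap.le, hgap.ge]
          · have hgap : ((k:ℝ)+1)/(n+1) - k/(n+1) = 1/(n+1) := by ring
            linarith [hq.2.2, hp.2.1]
        have := hp.1.2 (q - p) hpq
        rw [show p + (q - p) = q by ring] at this
        rw [dist_eq_norm, dist_eq_norm, norm_sub_rev (g p) (g q), norm_sub_rev p q]
        calc ‖g q - g p‖ ≤ ε * |q - p| := this
          _ ≤ (Real.toNNReal ε : ℝ) * ‖q - p‖ := by
              rw [Real.coe_toNNReal _ hε.le, Real.norm_eq_abs]
      calc μH[1] (g '' (Zn n ∩ Icc (k/(n+1) : ℝ) ((k+1)/(n+1))))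
          ≤ (Real.toNNReal ε : ℝ≥0∞) ^ (1:ℝ)
              * μH[1] (Zn n ∩ Icc (k/(n+1) : ℝ) ((k+1)/(n+1))) :=
            hlip.hausdorffMeasure_image_le (by norm_num)
        _ ≤ ENNReal.ofReal ε * ENNReal.ofReal (1/(n+1)) := by
            rw [ENNReal.rpow_one]
            apply mul_le_mul'
            · rw [ENNReal.ofReal]
            · calc μH[1] (Zn n ∩ Icc (k/(n+1) : ℝ) ((k+1)/(n+1)))
                  ≤ μH[1] (Icc (k/(n+1) : ℝ) ((k+1)/(n+1))) :=
                    measure_mono inter_subset_right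
                _ = ENNReal.ofReal (1/(n+1)) := by
                    rw [MeasureTheory.hausdorffMeasure_real, Real.volume_Icc]
                    congr 1
                    ring
    calc ∑' k : Fin (n+1), μH[1] (g '' (Zn n ∩ Icc (k/(n+1) : ℝ) ((k+1)/(n+1))))
        ≤ ∑' _k : Fin (n+1), ENNReal.ofReal ε * ENNReal.ofReal (1/(n+1)) :=
          ENNReal.tsum_le_tsum hpiece
      _ = ((n:ℝ≥0∞)+1) * (ENNReal.ofReal ε * ENNReal.ofReal (1/(n+1))) := by
          rw [tsum_fintype, Finset.sum_const, Finset.card_univ, Fintype.card_fin, nsmul_eq_mul]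
          push_cast
          ring
      _ ≤ ENNReal.ofReal ε := by
          rw [mul_comm (ENNReal.ofReal ε), ← mul_assoc]
          have : ((n:ℝ≥0∞)+1) * ENNReal.ofReal (1/(n+1)) = 1 := by
            rw [show ((n:ℝ≥0∞)+1) = ENNReal.ofReal ((n:ℝ)+1) by
                  rw [ENNReal.ofReal_add (by positivity) zero_le_one]; simp,
              ← ENNReal.ofReal_mul (by positivity)]
            rw [show ((n:ℝ)+1) * (1/(n+1)) = 1 by field_simp]
            simp
          rw [this, one_mul]
  refine ENNReal.le_of_forall_pos_le_add fun ε hε _ => ?_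
  rw [zero_add]
  have := main ε (by exact_mod_cast hε)
  rwa [ENNReal.ofReal_coe_nnreal] at this

/-- The image of the bad parameters (non-differentiability or zero derivative) is `H¹`-null. -/
lemma image_badparam_null {d : ℕ} {g : ℝ → Euc d} {L : ℝ≥0} (hg : LipschitzWith L g) :
    μH[1] (g '' {u ∈ Icc (0:ℝ) 1 | ¬ (DifferentiableAt ℝ g u ∧ deriv g u ≠ 0)}) = 0 := by
  have hsub : {u ∈ Icc (0:ℝ) 1 | ¬ (DifferentiableAt ℝ g u ∧ deriv g u ≠ 0)} ⊆
      {u : ℝ | ¬ DifferentiableAt ℝ g u} ∪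
        {u ∈ Icc (0:ℝ) 1 | DifferentiableAt ℝ g u ∧ deriv g u = 0} := by
    intro u hu
    by_cases hdiff : DifferentiableAt ℝ g u
    · right
      refine ⟨hu.1, hdiff, ?_⟩
      by_contra hne
      exact hu.2 ⟨hdiff, hne⟩
    · left; exact hdiff
  refine le_antisymm (le_trans (measure_mono (image_mono hsub)) ?_) zero_le
  rw [image_union]
  apply le_trans (measure_union_le _ _)
  have h1 : μH[1] (g '' {u : ℝ | ¬ DifferentiableAt ℝ g u}) = 0 := by
    rw [← nonpos_iff_eq_zero]
    have hnull : volume {u : ℝ | ¬ DifferentiableAt ℝ g u} = 0 := hg.ae_differentiableAt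
    have : μH[1] {u : ℝ | ¬ DifferentiableAt ℝ g u} = 0 := by
      rw [MeasureTheory.hausdorffMeasure_real]; exact hnull
    calc μH[1] (g '' {u : ℝ | ¬ DifferentiableAt ℝ g u})
        ≤ (L : ℝ≥0∞) ^ (1:ℝ) * μH[1] {u : ℝ | ¬ DifferentiableAt ℝ g u} :=
          hg.hausdorffMeasure_image_le zero_le_one _
      _ = 0 := by rw [this, mul_zero]
  rw [h1, image_zero_deriv_null, add_zero]

/-- Points of upper density `> 1 + ε` form an `H¹`-null set. -/
lemma Fset_null {d : ℕ} {E : Set (Euc d)} (hEm : MeasurableSet E) (hfin : μH[1] E ≠ ⊤)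
    {ε : ℝ} (hε : 0 < ε) :
    μH[1] {z ∈ E | ∀ δ > 0, ∃ r ∈ Ioo (0:ℝ) δ,
      ENNReal.ofReal ((1+ε) * (2*r)) ≤ μH[1] (E ∩ closedBall z r)} = 0 := by
  set F := {z ∈ E | ∀ δ > 0, ∃ r ∈ Ioo (0:ℝ) δ,
      ENNReal.ofReal ((1+ε) * (2*r)) ≤ μH[1] (E ∩ closedBall z r)} with hF
  set c := ENNReal.ofReal (1+ε) with hc
  have hc1 : 1 < c := by
    rw [hc, ← ENNReal.ofReal_one]
    exact ENNReal.ofReal_lt_ofReal_iff_of_nonneg zero_le_one |>.2 (by linarith)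
  have hcne0 : c ≠ 0 := by positivity
  have hcnetop : c ≠ ⊤ := ENNReal.ofReal_ne_top
  have hFE : F ⊆ E := fun z hz => hz.1
  have hFfin : μH[1] F ≠ ⊤ := fun h => hfin (top_le_iff.1 (h ▸ measure_mono hFE))
  set ν : Measure (Euc d) := (μH[1] : Measure (Euc d)).restrict E with hν
  have hνap : ∀ S : Set (Euc d), S ⊆ E → ν S = μH[1] S := by
    intro S hS
    rw [hν, Measure.restrict_apply' hEm, inter_eq_self_of_subset_left hS]
  haveI : IsFiniteMeasure ν := by
    constructor
    rw [hν, Measure.restrict_apply_univ]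
    exact lt_top_iff_ne_top.2 hfin
  have main : ∀ δ' : ℝ≥0, 0 < δ' →
      μH[1] F ≤ c⁻¹ * (μH[1] F + δ') + δ' := by
    intro δ' hδ'
    have hδ'0 : (δ' : ℝ≥0∞) ≠ 0 := by exact_mod_cast hδ'.ne'
    have hνF : ν F = μH[1] F := hνap F hFE
    have hνFfin : ν F ≠ ⊤ := by rw [hνF]; exact hFfin
    obtain ⟨U, hUF, hUopen, hUν⟩ := Set.exists_isOpen_lt_of_lt F (ν F + δ')
      (ENNReal.lt_add_right hνFfin hδ'0)
    -- construct for each scale a good cover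
    have cover : ∀ n : ℕ, ∃ t : ℕ → Set (Euc d), (F ⊆ ⋃ i, t i) ∧
        (∀ i, EMetric.diam (t i) ≤ ENNReal.ofReal (2/(n+1))) ∧
        ∑' i, EMetric.diam (t i) ≤ c⁻¹ * (μH[1] F + δ') + δ' := by
      intro n
      have hn1 : (0:ℝ) < 1/(n+1) := by positivity
      set f : Euc d → Set ℝ := fun z => {r' | r' ∈ Ioo (0:ℝ) (1/(n+1)) ∧
        closedBall z r' ⊆ U ∧
        ENNReal.ofReal ((1+ε)*(2*r')) ≤ μH[1] (E ∩ closedBall z r')} with hf_def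
      have hf : ∀ z ∈ F, ∀ δ > 0, (f z ∩ Ioo 0 δ).Nonempty := by
        intro z hz δ hδpos
        obtain ⟨rU, hrU, hballU⟩ := Metric.isOpen_iff.1 hUopen z (hUF hz)
        obtain ⟨r, hrmem, hrbound⟩ := hz.2 (min δ (min (1/(n+1)) rU))
          (lt_min hδpos (lt_min hn1 hrU))
        obtain ⟨hr0, hrlt⟩ := hrmem
        refine ⟨r, ⟨⟨⟨hr0, lt_of_lt_of_le hrlt ((min_le_right _ _).trans (min_le_left _ _))⟩,
          ?_, hrbound⟩, hr0, lt_of_lt_of_le hrlt (min_le_left _ _)⟩⟩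
        exact (closedBall_subset_ball
          (lt_of_lt_of_le hrlt ((min_le_right _ _).trans (min_le_right _ _)))).trans hballU
      obtain ⟨T, rad, hTcount, hTF, hrad, hTnull, hTdisj⟩ :=
        Besicovitch.exists_disjoint_closedBall_covering_ae ν f F hf (fun _ => 1)
          (fun _ _ => one_pos)
      have hμnull : μH[1] (F \ ⋃ x ∈ T, closedBall x (rad x)) = 0 := by
        rw [← hνap _ (diff_subset.trans hFE)]
        exact hTnull
      obtain ⟨t₂, ht₂cov, ht₂diam, ht₂sum⟩ := exists_cover_of_H1_null hμnull
        (show (0:ℝ≥0∞) < ENNReal.ofReal (2/(n+1)) from ENNReal.ofReal_pos.2 (by positivity))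
        (show (0:ℝ≥0∞) < (δ' : ℝ≥0∞) by exact_mod_cast hδ')
      simp only [ENNReal.rpow_one] at ht₂sum
      haveI : Encodable ↥T := hTcount.toEncodable
      have hradf : ∀ x, x ∈ T → rad x ∈ f x := fun x hx => (hrad x hx).1
      have hdiamball : ∀ x ∈ T, EMetric.diam (closedBall x (rad x)) ≤
          ENNReal.ofReal (2 * rad x) := by
        intro x hx
        apply EMetric.diam_le
        intro p hp q hq
        rw [edist_dist]
        apply ENNReal.ofReal_le_ofReal
        calc dist p q ≤ dist p x + dist x q := dist_triangle _ _ _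
          _ ≤ rad x + rad x := add_le_add hp (by rw [dist_comm]; exact hq)
          _ = 2 * rad x := by ring
      have ballsum : ∑' x : ↥T, EMetric.diam (closedBall (x : Euc d) (rad (x : Euc d))) ≤
          c⁻¹ * (μH[1] F + δ') := by
        have step1 : ∀ x : ↥T, EMetric.diam (closedBall (x : Euc d) (rad (x : Euc d))) ≤
            c⁻¹ * μH[1] (E ∩ closedBall (x : Euc d) (rad (x : Euc d))) := by
          rintro ⟨x, hx⟩
          refine le_trans (hdiamball x hx) ?_
          have hb := (hradf x hx).2.2
          have h1 : ENNReal.ofReal ((1+ε)*(2*rad x)) = c * ENNReal.ofReal (2*rad x) := by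
            rw [hc, ENNReal.ofReal_mul (by linarith : (0:ℝ) ≤ 1+ε)]
          have h2 : ENNReal.ofReal (2 * rad x) ≤ c⁻¹ * ENNReal.ofReal ((1+ε)*(2*rad x)) := by
            rw [h1, ← mul_assoc, ENNReal.inv_mul_cancel hcne0 hcnetop, one_mul]
          exact h2.trans (mul_le_mul_right hb _)
        refine le_trans (ENNReal.tsum_le_tsum step1) ?_
        rw [ENNReal.tsum_mul_left]
        apply mul_le_mul_right
        have hdisj : T.PairwiseDisjoint fun x => E ∩ closedBall x (rad x) :=
          hTdisj.mono_on fun x _ => inter_subset_right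
        calc ∑' x : ↥T, μH[1] (E ∩ closedBall (x : Euc d) (rad (x : Euc d)))
            = μH[1] (⋃ x ∈ T, E ∩ closedBall x (rad x)) :=
              (measure_biUnion hTcount hdisj fun x hx => hEm.inter measurableSet_closedBall).symm
          _ ≤ μH[1] (E ∩ U) := by
              apply measure_mono
              apply iUnion₂_subset
              intro x hx
              exact inter_subset_inter_right E ((hradf x hx).2.1)
          _ = ν U := by rw [hν, Measure.restrict_apply' hEm, inter_comm]
          _ ≤ μH[1] F + δ' := by rw [← hνF]; exact hUν.le
      -- combine the two covers
      refine ⟨fun i => if Even i then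
          (⋃ p ∈ Encodable.decode₂ ↥T (i/2), closedBall (p : Euc d) (rad (p : Euc d)))
          else t₂ (i/2), ?_, ?_, ?_⟩
      · intro z hz
        by_cases hzb : z ∈ ⋃ x ∈ T, closedBall x (rad x)
        · rw [biUnion_eq_iUnion, ← Encodable.iUnion_decode₂] at hzb
          obtain ⟨i, hi⟩ := mem_iUnion.1 hzb
          refine mem_iUnion.2 ⟨2*i, ?_⟩
          beta_reduce
          rw [if_pos (even_two_mul i), Nat.mul_div_cancel_left i (by norm_num : 0 < 2)]
          exact hi
        · obtain ⟨k, hk⟩ := mem_iUnion.1 (ht₂cov ⟨hz, hzb⟩)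
          refine mem_iUnion.2 ⟨2*k+1, ?_⟩
          beta_reduce
          rw [if_neg (by simp [Nat.even_add_one, parity_simps]), show (2*k+1)/2 = k by omega]
          exact hk
      · intro i
        beta_reduce
        by_cases hi : Even i
        · rw [if_pos hi]
          rcases h2 : Encodable.decode₂ ↥T (i/2) with - | p
          · simp
            rw [show EMetric.diam (∅ : Set (Euc d)) = 0 from Metric.ediam_empty]; exact zero_le
          · simp only [h2, Option.mem_def, Option.some.injEq, iUnion_iUnion_eq_left,
              iUnion_iUnion_eq_right]
            refine le_trans (hdiamball (p : Euc d) p.2) (ENNReal.ofReal_le_ofReal ?_)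
            have := (hradf (p : Euc d) p.2).1.2
            rw [show (2:ℝ)/(n+1) = 2 * (1/(n+1)) by ring]
            linarith
        · rw [if_neg hi]
          exact ht₂diam _
      · beta_reduce
        rw [← tsum_even_add_odd ENNReal.summable ENNReal.summable]
        have he : (∑' k : ℕ, EMetric.diam (if Even (2*k) then
            (⋃ p ∈ Encodable.decode₂ ↥T ((2*k)/2), closedBall (p : Euc d) (rad (p : Euc d)))
            else t₂ ((2*k)/2)))
            = ∑' x : ↥T, EMetric.diam (closedBall (x : Euc d) (rad (x : Euc d))) := by
          rw [tsum_congr (fun k => by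
            rw [if_pos (even_two_mul k), Nat.mul_div_cancel_left k (by norm_num : 0 < 2)])]
          exact tsum_iUnion_decode₂ (fun S => EMetric.diam S) EMetric.diam_empty _
        have ho : (∑' k : ℕ, EMetric.diam (if Even (2*k+1) then
            (⋃ p ∈ Encodable.decode₂ ↥T ((2*k+1)/2), closedBall (p : Euc d) (rad (p : Euc d)))
            else t₂ ((2*k+1)/2)))
            = ∑' k : ℕ, EMetric.diam (t₂ k) := by
          refine tsum_congr fun k => by
            rw [if_neg (by simp [Nat.even_add_one, parity_simps]), show (2*k+1)/2 = k by omega]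
        rw [he, ho]
        exact add_le_add ballsum ht₂sum
    -- use the covers at every scale
    choose t ht1 ht2 ht3 using cover
    have htend : Tendsto (fun n : ℕ => ENNReal.ofReal (2/((n:ℝ)+1))) atTop (nhds 0) := by
      rw [← ENNReal.ofReal_zero]
      apply ENNReal.tendsto_ofReal
      have h0 := (tendsto_const_div_atTop_nhds_zero_nat (2:ℝ)).comp (tendsto_add_atTop_nat 1)
      exact h0.congr fun a => by simp only [Function.comp_apply]; push_cast; ring
    refine le_trans (MeasureTheory.Measure.hausdorffMeasure_le_liminf_tsum 1 F
      (fun n : ℕ => ENNReal.ofReal (2/((n:ℝ)+1))) htend t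
      (Eventually.of_forall ht2) (Eventually.of_forall ht1)) ?_
    have hB : ∀ n : ℕ, ∑' i, EMetric.diam (t n i) ^ (1:ℝ) ≤ c⁻¹ * (μH[1] F + δ') + δ' :=
      fun n => by simpa [ENNReal.rpow_one] using ht3 n
    calc liminf (fun n => ∑' i, EMetric.diam (t n i) ^ (1:ℝ)) atTop
        ≤ liminf (fun _ : ℕ => c⁻¹ * (μH[1] F + δ') + δ') atTop :=
          liminf_le_liminf (Eventually.of_forall hB)
      _ = c⁻¹ * (μH[1] F + δ') + δ' := liminf_const _
  -- conclude
  have hle : μH[1] F ≤ c⁻¹ * μH[1] F := by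
    apply ENNReal.le_of_forall_pos_le_add
    intro η hη _
    have h2 : (0:ℝ≥0) < η/2 := half_pos hη
    have hc'le1 : c⁻¹ ≤ 1 := ENNReal.inv_le_one.2 hc1.le
    calc μH[1] F ≤ c⁻¹ * (μH[1] F + (η/2 : ℝ≥0)) + (η/2 : ℝ≥0) := main (η/2) h2
      _ = c⁻¹ * μH[1] F + c⁻¹ * (η/2 : ℝ≥0) + (η/2 : ℝ≥0) := by rw [mul_add]
      _ ≤ c⁻¹ * μH[1] F + 1 * (η/2 : ℝ≥0) + (η/2 : ℝ≥0) := by gcongr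
      _ = c⁻¹ * μH[1] F + (((η/2 : ℝ≥0) : ℝ≥0∞) + ((η/2 : ℝ≥0) : ℝ≥0∞)) := by ring
      _ = c⁻¹ * μH[1] F + η := by rw [← ENNReal.coe_add, add_halves]
  by_contra h0
  have hlt : c⁻¹ * μH[1] F < 1 * μH[1] F :=
    ENNReal.mul_lt_mul_left h0 hFfin (ENNReal.inv_lt_one.2 hc1)
  rw [one_mul] at hlt
  exact absurd hle (not_le.2 hlt)

/-- Combine eventual upper and lower bounds into density one. -/
lemma density_one_of_bounds {d : ℕ} {E : Set (Euc d)} {z : Euc d} (hfin : μH[1] E ≠ ⊤)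
    (hupper : ∀ ε : ℝ, 0 < ε → ∀ᶠ r in nhdsWithin (0:ℝ) (Ioi 0),
      μH[1] (E ∩ closedBall z r) ≤ ENNReal.ofReal ((1+ε)*(2*r)))
    (hlower : ∀ ε : ℝ, 0 < ε → ∀ᶠ r in nhdsWithin (0:ℝ) (Ioi 0),
      ENNReal.ofReal ((1-ε)*(2*r)) ≤ μH[1] (E ∩ closedBall z r)) :
    Tendsto (fun r : ℝ => (μH[1] (E ∩ closedBall z r)).toReal / (2 * r))
      (nhdsWithin 0 (Ioi 0)) (nhds 1) := by
  rw [Metric.tendsto_nhds]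
  intro ε hε
  have hε2 : 0 < ε/2 := by linarith
  filter_upwards [hupper (ε/2) hε2, hlower (ε/2) hε2, self_mem_nhdsWithin] with r hup hlo hr
  have hr0 : (0:ℝ) < r := hr
  have hfin' : μH[1] (E ∩ closedBall z r) ≠ ⊤ :=
    fun h => hfin (top_le_iff.1 (h ▸ measure_mono inter_subset_left))
  have h1 : (μH[1] (E ∩ closedBall z r)).toReal ≤ (1+ε/2)*(2*r) := by
    have := ENNReal.toReal_mono ENNReal.ofReal_ne_top hup
    rwa [ENNReal.toReal_ofReal (by positivity)] at this
  have h2 : (1-ε/2)*(2*r) ≤ (μH[1] (E ∩ closedBall z r)).toReal := by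
    rcases le_or_gt (1-ε/2) 0 with hneg | hpos
    · have : (1-ε/2)*(2*r) ≤ 0 := mul_nonpos_of_nonpos_of_nonneg hneg (by positivity)
      exact this.trans ENNReal.toReal_nonneg
    · have := ENNReal.toReal_mono hfin' hlo
      rwa [ENNReal.toReal_ofReal (by positivity)] at this
  set x := (μH[1] (E ∩ closedBall z r)).toReal with hx
  have h2r : (0:ℝ) < 2*r := by positivity
  have hq1 : x/(2*r) ≤ 1+ε/2 := (div_le_iff₀ h2r).2 (by linarith)
  have hq2 : 1-ε/2 ≤ x/(2*r) := (le_div_iff₀ h2r).2 (by linarith)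
  rw [Real.dist_eq, abs_lt]
  constructor <;> linarith

/-- In a uniformly disconnected set, a Lipschitz path between two distinct points of `K`
must go far from `K` somewhere. -/
lemma exists_far_point {d : ℕ} {K : Set (Euc d)} (hKcomp : IsCompact K)
    {lam : ℝ} (hlam : 0 < lam)
    (hKud : ∀ x ∈ K, ∀ y ∈ K, x ≠ y →
      ∀ (n : ℕ) (p : ℕ → Euc d), (∀ i ≤ n, p i ∈ K) → p 0 = x → p n = y →
        ∃ i < n, lam * dist x y < dist (p (i + 1)) (p i))
    {g : ℝ → Euc d} {L : ℝ≥0} (hg : LipschitzWith L g)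
    {a b : ℝ} (hab : a < b) {x y : Euc d} (hx : x ∈ K) (hy : y ∈ K) (hxy : x ≠ y)
    (hga : g a = x) (hgb : g b = y) :
    ∃ u₀ ∈ Icc a b, (3/8) * lam * dist x y ≤ infDist (g u₀) K := by
  by_contra hcon
  push_neg at hcon
  have hdxy : 0 < dist x y := dist_pos.2 hxy
  have hKne : K.Nonempty := ⟨x, hx⟩
  -- choose n large
  obtain ⟨n, hn⟩ := exists_nat_gt (max 1 ((L * (b - a)) / (lam * dist x y / 8)))
  have hn1 : 1 ≤ n := by
    have := (le_max_left 1 _).trans hn.le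
    exact_mod_cast Nat.one_le_cast.1 (by exact_mod_cast this)
  have hnpos : (0:ℝ) < n := by positivity
  have hstep : L * (b - a) / n < lam * dist x y / 8 := by
    rw [div_lt_iff₀ hnpos]
    have h8 : (0:ℝ) < lam * dist x y / 8 := by positivity
    have := (le_max_right 1 ((L * (b - a)) / (lam * dist x y / 8))).trans_lt hn
    calc L * (b - a) = ((L * (b - a)) / (lam * dist x y / 8)) * (lam * dist x y / 8) := by
          field_simp
      _ < n * (lam * dist x y / 8) := by
          apply mul_lt_mul_of_pos_right this h8
      _ = lam * dist x y / 8 * n := by ring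
  set u : ℕ → ℝ := fun i => a + i * (b - a) / n with hu
  have humem : ∀ i ≤ n, u i ∈ Icc a b := by
    intro i hi
    have hba : (0:ℝ) ≤ b - a := by linarith
    constructor
    · have : (0:ℝ) ≤ i * (b - a) / n := div_nonneg (mul_nonneg (Nat.cast_nonneg i) hba) hnpos.le
      simp [hu]; linarith
    · have hin : (i:ℝ) ≤ n := by exact_mod_cast hi
      have : (i:ℝ) * (b - a) / n ≤ b - a := by
        rw [div_le_iff₀ hnpos]
        nlinarith [sub_nonneg.2 hab.le]
      simp [hu]; linarith
  set p : ℕ → Euc d := fun i => if i = 0 then x else if n ≤ i then y else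
    (hKcomp.exists_infDist_eq_dist hKne (g (u i))).choose with hp
  have hpK : ∀ i ≤ n, p i ∈ K := by
    intro i hi
    by_cases h0 : i = 0
    · simp [hp, h0, hx]
    · by_cases hni : n ≤ i
      · simp [hp, h0, hni, hy]
      · simp only [hp, h0, hni, if_false]
        exact (hKcomp.exists_infDist_eq_dist hKne (g (u i))).choose_spec.1
  have hpdist : ∀ i ≤ n, dist (g (u i)) (p i) < 3/8 * lam * dist x y := by
    intro i hi
    have hρ' : (0:ℝ) < 3/8 * lam * dist x y := by positivity
    by_cases h0 : i = 0
    · subst h0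
      have hua : u 0 = a := by simp [hu]
      simp [hp, hua, hga, hρ']
    · by_cases hni : n ≤ i
      · have hieq : i = n := le_antisymm hi hni
        subst hieq
        have hub : u i = b := by
          rw [hu]
          have hne : (i:ℝ) ≠ 0 := by
            have : (0:ℝ) < i := hnpos
            exact this.ne'
          show a + (i:ℝ) * (b - a) / (i:ℝ) = b
          rw [mul_div_cancel_left₀ _ hne]; ring
        simp [hp, h0, hub, hgb, hρ']
      · have hmem := (hKcomp.exists_infDist_eq_dist hKne (g (u i))).choose_spec.2
        simp only [hp, h0, hni, if_false]
        rw [← hmem]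
        exact hcon (u i) (humem i hi)
  have hp0 : p 0 = x := by simp [hp]
  have hpn : p n = y := by
    have : ¬ (n = 0) := by omega
    simp [hp, this]
  obtain ⟨i, hilt, hgt⟩ := hKud x hx y hy hxy n p hpK hp0 hpn
  -- contradiction: consecutive points are close
  have hustep : dist (u (i+1)) (u i) = (b - a) / n := by
    rw [Real.dist_eq, hu]
    have : a + (i+1:ℕ) * (b - a) / n - (a + i * (b - a) / n) = (b - a)/n := by
      push_cast
      ring
    rw [this, abs_of_nonneg (div_nonneg (by linarith) hnpos.le)]
  have hgstep : dist (g (u (i+1))) (g (u i)) ≤ L * ((b - a) / n) := by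
    have := hg.dist_le_mul (u (i+1)) (u i)
    rwa [hustep] at this
  have h1 := hpdist i (le_of_lt hilt)
  have h2 := hpdist (i+1) hilt
  have : dist (p (i+1)) (p i) ≤ dist (p (i+1)) (g (u (i+1))) + dist (g (u (i+1))) (g (u i))
      + dist (g (u i)) (p i) := dist_triangle4 _ _ _ _
  rw [dist_comm (p (i+1)) (g (u (i+1)))] at this
  have hL : L * ((b-a)/n) = L * (b-a) / n := by ring
  nlinarith [hstep, hgt, h1, h2, this, hgstep]

section Main

def UniformlyDisconnectedWith' {d : ℕ} (K : Set (Euc d)) (lam : ℝ) : Prop :=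
  ∀ x ∈ K, ∀ y ∈ K, x ≠ y →
    ∀ (n : ℕ) (p : ℕ → Euc d), (∀ i ≤ n, p i ∈ K) → p 0 = x → p n = y →
      ∃ i < n, lam * dist x y < dist (p (i + 1)) (p i)

lemma stmt2_aux (d : ℕ) (K : Set (Euc d)) (hKcomp : IsCompact K)
    (lam : ℝ) (hlam : 0 < lam) (hKud : UniformlyDisconnectedWith' K lam)
    (g₀ : ℝ → Euc d) (L : ℝ≥0) (hL : LipschitzOnWith L g₀ (Icc 0 1))
    {x y : Euc d} (hx : x ∈ K) (hy : y ∈ K) (hxy : x ≠ y)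
    {a b : ℝ} (ha : a ∈ Icc (0:ℝ) 1) (hga : g₀ a = x) (hb : b ∈ Icc (0:ℝ) 1) (hgb : g₀ b = y)
    (hab : a < b) :
    ∃ s ∈ Icc (0 : ℝ) 1, ∃ t ∈ Icc (0 : ℝ) 1,
      g₀ s ∈ K ∧ g₀ t ∈ K ∧ s < t ∧
      Ioo s t ⊆ Ioo a b ∧
      (∀ u ∈ Ioo s t, g₀ u ∉ K) ∧
      ∃ ζ ∈ Ioo s t,
        (1 / 4) * lam * dist x y < infDist (g₀ ζ) K ∧
        Tendsto (fun r : ℝ => (μH[1] ((g₀ '' Icc (0:ℝ) 1) ∩ closedBall (g₀ ζ) r)).toReal / (2 * r))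
          (nhdsWithin 0 (Ioi 0)) (nhds 1) := by
  set g : ℝ → Euc d := fun u => g₀ (projIcc (0:ℝ) 1 zero_le_one u) with hgdef
  have hg_eq : ∀ u ∈ Icc (0:ℝ) 1, g u = g₀ u := by
    intro u hu
    rw [hgdef]
    simp [projIcc_of_mem zero_le_one hu]
  have hgLip : LipschitzWith L g := by
    have h1 : LipschitzWith 1 (projIcc (0:ℝ) 1 zero_le_one) := LipschitzWith.projIcc _
    have h2 : LipschitzWith L (fun v : Icc (0:ℝ) 1 => g₀ v) := lipschitzOnWith_iff_restrict.1 hL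
    have h3 := h2.comp h1
    rw [mul_one] at h3
    exact h3
  have hgcont : Continuous g := hgLip.continuous
  have hrange : range g = g₀ '' Icc (0:ℝ) 1 := by
    ext w
    constructor
    · rintro ⟨u, rfl⟩
      exact ⟨projIcc (0:ℝ) 1 zero_le_one u, (projIcc (0:ℝ) 1 zero_le_one u).2, rfl⟩
    · rintro ⟨u, hu, rfl⟩
      exact ⟨u, hg_eq u hu⟩
  set E := g₀ '' Icc (0:ℝ) 1 with hE
  have hab01 : Icc a b ⊆ Icc (0:ℝ) 1 := Icc_subset_Icc ha.1 hb.2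
  have hEcomp : IsCompact E := isCompact_Icc.image_of_continuousOn hL.continuousOn
  have hEm : MeasurableSet E := hEcomp.isClosed.measurableSet
  have hEg : g '' Icc (0:ℝ) 1 = E := image_congr hg_eq
  have hEfin : μH[1] E ≠ ⊤ := by
    have hb1 : μH[1] E ≤ (L : ℝ≥0∞) ^ (1:ℝ) * μH[1] (Icc (0:ℝ) 1) := by
      rw [← hEg]
      exact hgLip.hausdorffMeasure_image_le zero_le_one _
    refine ne_top_of_le_ne_top ?_ hb1
    rw [MeasureTheory.hausdorffMeasure_real, Real.volume_Icc, ENNReal.rpow_one]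
    exact ENNReal.mul_ne_top ENNReal.coe_ne_top ENNReal.ofReal_ne_top
  have hga' : g a = x := by rw [hg_eq a ha, hga]
  have hgb' : g b = y := by rw [hg_eq b hb, hgb]
  obtain ⟨u₀, hu₀mem, hu₀far⟩ :=
    exists_far_point hKcomp hlam hKud hgLip hab hx hy hxy hga' hgb'
  have hdxy : 0 < dist x y := dist_pos.2 hxy
  set ρ : ℝ := 1/4 * lam * dist x y with hρ
  set ρ' : ℝ := 3/8 * lam * dist x y with hρ'
  have hρpos : 0 < ρ := by positivity
  have hρρ' : ρ < ρ' := by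
    rw [hρ, hρ']
    nlinarith [mul_pos hlam hdxy]
  have hu₀far' : ρ' ≤ infDist (g u₀) K := hu₀far
  have hu₀notK : g u₀ ∉ K := by
    intro hmem
    rw [infDist_zero_of_mem hmem] at hu₀far'
    nlinarith [mul_pos hlam hdxy]
  set P := Icc a b ∩ g ⁻¹' K with hP
  have hPclosed : IsClosed P := isClosed_Icc.inter (hKcomp.isClosed.preimage hgcont)
  set Q₁ := P ∩ Icc a u₀ with hQ₁
  have hQ₁closed : IsClosed Q₁ := hPclosed.inter isClosed_Icc
  have haQ₁ : a ∈ Q₁ :=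
    ⟨⟨⟨le_refl a, hab.le⟩, by rw [mem_preimage, hga']; exact hx⟩, ⟨le_refl a, hu₀mem.1⟩⟩
  have hQ₁bdd : BddAbove Q₁ := bddAbove_Icc.mono inter_subset_right
  set s := sSup Q₁ with hs
  have hsQ₁ : s ∈ Q₁ := hQ₁closed.csSup_mem ⟨a, haQ₁⟩ hQ₁bdd
  have hsu₀ : s < u₀ :=
    lt_of_le_of_ne hsQ₁.2.2 (fun heq => hu₀notK (heq ▸ hsQ₁.1.2))
  set Q₂ := P ∩ Icc u₀ b with hQ₂
  have hQ₂closed : IsClosed Q₂ := hPclosed.inter isClosed_Icc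
  have hbQ₂ : b ∈ Q₂ :=
    ⟨⟨⟨hab.le, le_refl b⟩, by rw [mem_preimage, hgb']; exact hy⟩, ⟨hu₀mem.2, le_refl b⟩⟩
  have hQ₂bdd : BddBelow Q₂ := bddBelow_Icc.mono inter_subset_right
  set t := sInf Q₂ with ht
  have htQ₂ : t ∈ Q₂ := hQ₂closed.csInf_mem ⟨b, hbQ₂⟩ hQ₂bdd
  have hu₀t : u₀ < t :=
    lt_of_le_of_ne htQ₂.2.1 (fun heq => hu₀notK (heq.symm ▸ htQ₂.1.2))
  have hsa : a ≤ s := le_csSup hQ₁bdd haQ₁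
  have htb : t ≤ b := csInf_le hQ₂bdd hbQ₂
  have hst : s < t := hsu₀.trans hu₀t
  have hIoo : Ioo s t ⊆ Ioo a b := fun u hu =>
    ⟨lt_of_le_of_lt hsa hu.1, lt_of_lt_of_le hu.2 htb⟩
  have hs01 : s ∈ Icc (0:ℝ) 1 := hab01 hsQ₁.1.1
  have ht01 : t ∈ Icc (0:ℝ) 1 := hab01 htQ₂.1.1
  have hgsK : g s ∈ K := hsQ₁.1.2
  have hgtK : g t ∈ K := htQ₂.1.2
  have hnotK : ∀ u ∈ Ioo s t, g u ∉ K := by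
    intro u hu hK
    have huab : u ∈ Ioo a b := hIoo hu
    have huP : u ∈ P := ⟨⟨huab.1.le, huab.2.le⟩, hK⟩
    rcases le_total u u₀ with h | h
    · exact absurd (le_csSup hQ₁bdd ⟨huP, ⟨huab.1.le, h⟩⟩) (not_le.2 hu.1)
    · exact absurd (csInf_le hQ₂bdd ⟨huP, ⟨h, huab.2.le⟩⟩) (not_le.2 hu.2)
  -- find a good point ζ
  have hgs0 : infDist (g s) K = 0 := infDist_zero_of_mem hgsK
  set φ : Euc d → ℝ := fun w => infDist w K with hφ
  have hφcont : Continuous φ := continuous_infDist_pt K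
  have hIVT : Icc ((φ ∘ g) s) ((φ ∘ g) u₀) ⊆ (φ ∘ g) '' Icc s u₀ :=
    intermediate_value_Icc hsu₀.le ((hφcont.comp hgcont).continuousOn)
  set A := (g '' Icc s u₀) ∩ φ ⁻¹' (Ioo ρ ρ') with hA
  have hAsub : Ioo ρ ρ' ⊆ φ '' A := by
    intro cc hcc
    have hccIcc : cc ∈ Icc ((φ ∘ g) s) ((φ ∘ g) u₀) := by
      constructor
      · show (φ ∘ g) s ≤ cc
        simp only [Function.comp_apply, hφ]
        rw [hgs0]
        linarith [hcc.1, hρpos]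
      · exact le_trans hcc.2.le hu₀far'
    obtain ⟨u, hu, hcu⟩ := hIVT hccIcc
    refine ⟨g u, ⟨mem_image_of_mem g hu, ?_⟩, hcu⟩
    rw [mem_preimage]
    show φ (g u) ∈ Ioo ρ ρ'
    rw [show φ (g u) = cc from hcu]
    exact hcc
  have hAmeas : ENNReal.ofReal (ρ' - ρ) ≤ μH[1] A := by
    have hφlip : LipschitzWith 1 φ := lipschitz_infDist_pt K
    calc ENNReal.ofReal (ρ' - ρ) = volume (Ioo ρ ρ') := (Real.volume_Ioo).symm
      _ = μH[1] (Ioo ρ ρ') := by rw [MeasureTheory.hausdorffMeasure_real]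
      _ ≤ μH[1] (φ '' A) := measure_mono hAsub
      _ ≤ (1:ℝ≥0) ^ (1:ℝ) * μH[1] A := hφlip.hausdorffMeasure_image_le zero_le_one _
      _ = μH[1] A := by simp
  set N := ⋃ k : ℕ, {z ∈ E | ∀ δ > 0, ∃ r ∈ Ioo (0:ℝ) δ,
    ENNReal.ofReal ((1+1/(k+1))*(2*r)) ≤ μH[1] (E ∩ closedBall z r)} with hN
  have hNnull : μH[1] N = 0 := by
    rw [hN]
    exact measure_iUnion_null fun k => Fset_null hEm hEfin (by positivity)
  set Bad := N ∪ g '' {u ∈ Icc (0:ℝ) 1 | ¬ (DifferentiableAt ℝ g u ∧ deriv g u ≠ 0)} with hBad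
  have hBadnull : μH[1] Bad = 0 := by
    rw [hBad]
    exact measure_union_null hNnull (image_badparam_null hgLip)
  have hex : ∃ z, z ∈ A \ Bad := by
    by_contra hcon2
    push_neg at hcon2
    have hsubBad : A ⊆ Bad := by
      intro z hz
      by_contra hzB
      exact hcon2 z ⟨hz, hzB⟩
    have hA0 : μH[1] A = 0 := measure_mono_null hsubBad hBadnull
    rw [hA0] at hAmeas
    have : (0:ℝ≥0∞) < ENNReal.ofReal (ρ' - ρ) := ENNReal.ofReal_pos.2 (by linarith)
    exact absurd hAmeas (not_le.2 this)
  obtain ⟨z, ⟨hzA1, hzA2⟩, hzBad⟩ := hex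
  obtain ⟨ζ, hζIcc, hζz⟩ := hzA1
  have hzρ : ρ < φ z := hzA2.1
  have hζs : s < ζ := by
    rcases lt_or_eq_of_le hζIcc.1 with h | h
    · exact h
    · exfalso
      rw [← h] at hζz
      rw [← hζz] at hzρ
      show False
      have : φ (g s) = 0 := hgs0
      rw [this] at hzρ
      linarith
  have hζt : ζ < t := lt_of_le_of_lt hζIcc.2 hu₀t
  have hζ01 : ζ ∈ Icc (0:ℝ) 1 := hab01 ⟨hsa.trans hζIcc.1, hζIcc.2.trans hu₀mem.2⟩
  have hζgood : DifferentiableAt ℝ g ζ ∧ deriv g ζ ≠ 0 := by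
    by_contra hcon3
    exact hzBad (Or.inr ⟨ζ, ⟨hζ01, hcon3⟩, hζz⟩)
  have hzE : z ∈ E := by
    rw [← hζz, ← hrange]
    exact mem_range_self _
  -- density one at z
  have hdens : Tendsto (fun r : ℝ => (μH[1] (E ∩ closedBall z r)).toReal / (2 * r))
      (nhdsWithin 0 (Ioi 0)) (nhds 1) := by
    apply density_one_of_bounds hEfin
    · -- upper bounds
      intro ε hε
      obtain ⟨k, hk⟩ := exists_nat_one_div_lt hε
      have hzk : z ∉ {z ∈ E | ∀ δ > 0, ∃ r ∈ Ioo (0:ℝ) δ,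
          ENNReal.ofReal ((1+1/(k+1))*(2*r)) ≤ μH[1] (E ∩ closedBall z r)} := by
        intro h
        exact hzBad (Or.inl (mem_iUnion.2 ⟨k, h⟩))
      have hnk : ¬ (∀ δ > 0, ∃ r ∈ Ioo (0:ℝ) δ,
          ENNReal.ofReal ((1+1/(k+1))*(2*r)) ≤ μH[1] (E ∩ closedBall z r)) := by
        intro h
        exact hzk ⟨hzE, h⟩
      push_neg at hnk
      obtain ⟨δ, hδpos, hδ⟩ := hnk
      filter_upwards [Ioo_mem_nhdsGT hδpos] with r hr
      have := hδ r hr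
      refine le_trans this.le (ENNReal.ofReal_le_ofReal ?_)
      have hr0 : 0 < r := hr.1
      have : 1 + 1/((k:ℝ)+1) ≤ 1 + ε := by
        have : 1/((k:ℝ)+1) ≤ ε := by
          have := hk.le
          push_cast at this ⊢
          linarith
        linarith
      nlinarith [hr0]
    · -- lower bounds
      intro ε hε
      have hlower := lower_density hgcont (hζgood.1.hasDerivAt) ?hvne hε
      case hvne => exact hζgood.2
      rw [hrange] at hlower
      have hzζ : g ζ = z := hζz
      rw [hzζ] at hlower
      exact hlower
  refine ⟨s, hs01, t, ht01, ?_, ?_, hst, hIoo, ?_, ζ, ⟨hζs, hζt⟩, ?_, ?_⟩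
  · rw [← hg_eq s hs01]; exact hgsK
  · rw [← hg_eq t ht01]; exact hgtK
  · intro u hu
    rw [← hg_eq u (hab01 ⟨(hIoo hu).1.le, (hIoo hu).2.le⟩)]
    exact hnotK u hu
  · rw [← hg_eq ζ hζ01, hζz]
    exact hzρ
  · rw [← hg_eq ζ hζ01, hζz]
    exact hdens

end Main


/-- **Lemma 3.2.** Let `K ⊆ ℝ^d` be compact, not a singleton, uniformly disconnected
with constant `lam > 0`, and let `g₀` be a Lipschitz capture of `K`. Then for all
distinct `x, y ∈ K` and all `a ∈ g₀⁻¹({x})`, `b ∈ g₀⁻¹({y})`, there are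
`s, t ∈ g₀⁻¹(K)` with `(s, t) ⊆ (min{a,b}, max{a,b}) \ g₀⁻¹(K)` and a value
`ζ ∈ (s, t)` with `dist(g₀(ζ), K) > (1/4)·lam·|x - y|` and `g₀(ζ)` a point of
`H¹`-density `1` of `G₀ = g₀([0,1])`. -/
theorem stmt2 (d : ℕ) (K : Set (Euc d)) (hKcomp : IsCompact K)
    (hKnotsing : ¬∃ z : Euc d, K = {z})
    (lam : ℝ) (hlam : 0 < lam) (hKud : UniformlyDisconnectedWith K lam)
    (g₀ : ℝ → Euc d) (hg₀ : IsLipschitzCapture g₀ K) :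
    ∀ x ∈ K, ∀ y ∈ K, x ≠ y →
      ∀ a ∈ Icc (0 : ℝ) 1, g₀ a = x →
        ∀ b ∈ Icc (0 : ℝ) 1, g₀ b = y →
          ∃ s ∈ Icc (0 : ℝ) 1, ∃ t ∈ Icc (0 : ℝ) 1,
            g₀ s ∈ K ∧ g₀ t ∈ K ∧ s < t ∧
            Ioo s t ⊆ Ioo (min a b) (max a b) ∧
            (∀ u ∈ Ioo s t, g₀ u ∉ K) ∧
            ∃ ζ ∈ Ioo s t,
              (1 / 4) * lam * dist x y < infDist (g₀ ζ) K ∧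
              H1DensityOne (g₀ '' Icc (0 : ℝ) 1) (g₀ ζ) := by
  intro x hx y hy hxy a ha hga b hb hgb
  obtain ⟨⟨L, hL⟩, -⟩ := hg₀
  have hKud' : UniformlyDisconnectedWith' K lam := hKud
  have hab : a ≠ b := fun h => hxy (by rw [← hga, ← hgb, h])
  rcases lt_or_gt_of_ne hab with h | h
  · obtain ⟨s, hs, t, ht, h1, h2, h3, h4, h5, ζ, hζ, h6, h7⟩ :=
      stmt2_aux d K hKcomp lam hlam hKud' g₀ L hL hx hy hxy ha hga hb hgb h
    refine ⟨s, hs, t, ht, h1, h2, h3, ?_, h5, ζ, hζ, h6, h7⟩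
    rwa [min_eq_left h.le, max_eq_right h.le]
  · obtain ⟨s, hs, t, ht, h1, h2, h3, h4, h5, ζ, hζ, h6, h7⟩ :=
      stmt2_aux d K hKcomp lam hlam hKud' g₀ L hL hy hx hxy.symm hb hgb ha hga h
    refine ⟨s, hs, t, ht, h1, h2, h3, ?_, h5, ζ, hζ, ?_, h7⟩
    · rwa [min_eq_right h.le, max_eq_left h.le]
    · rwa [dist_comm x y]
end
end

section
/- Let K ⊆ ℝ^d be a nonempty closed set, let (x_i)_{i∈ℕ} ⊆ K be a sequence converging to a point x ∈ K, and let T be a nonempty closed set with T ∈ Tan(K, x_i) for every i ∈ ℕ. Then T ∈ Ψ-Tan(K, x). -/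
open Set Metric Filter MeasureTheory

noncomputable section

lemma infd_nonneg {d : ℕ} (a : Euc d) (B : Set (Euc d)) : 0 ≤ sInf ((fun b => dist a b) '' B) :=
  Real.sInf_nonneg (by rintro _ ⟨b, _, rfl⟩; exact dist_nonneg)

lemma infd_le_dist {d : ℕ} (a : Euc d) {B : Set (Euc d)} {b : Euc d} (hb : b ∈ B) :
    sInf ((fun b' => dist a b') '' B) ≤ dist a b :=
  csInf_le ⟨0, by rintro _ ⟨b', _, rfl⟩; exact dist_nonneg⟩ ⟨b, hb, rfl⟩

lemma exc_nonneg {d : ℕ} (A B : Set (Euc d)) : 0 ≤ exc A B :=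
  Real.sSup_nonneg (by rintro _ ⟨a, _, rfl⟩; exact infd_nonneg a B)

lemma exc_le {d : ℕ} {A B : Set (Euc d)} {c : ℝ} (hc : 0 ≤ c)
    (h : ∀ a ∈ A, sInf ((fun b => dist a b) '' B) ≤ c) : exc A B ≤ c :=
  Real.sSup_le (by rintro _ ⟨a, ha, rfl⟩; exact h a ha) hc

lemma le_exc {d : ℕ} {A B : Set (Euc d)} {a : Euc d} (ha : a ∈ A) {M : ℝ}
    (hM : ∀ a' ∈ A, sInf ((fun b => dist a' b) '' B) ≤ M) :
    sInf ((fun b => dist a b) '' B) ≤ exc A B :=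
  le_csSup ⟨M, by rintro _ ⟨a', ha', rfl⟩; exact hM a' ha'⟩ ⟨a, ha, rfl⟩

lemma exc_mono {d : ℕ} {A A' B : Set (Euc d)} (hsub : A ⊆ A') {b₀ : Euc d} (hb₀ : b₀ ∈ B)
    {M : ℝ} (hM : ∀ a ∈ A', dist a b₀ ≤ M) : exc A B ≤ exc A' B :=
  exc_le (exc_nonneg _ _) fun a ha =>
    le_exc (hsub ha) fun a' ha' => (infd_le_dist a' hb₀).trans (hM a' ha')

/-- **Remark 2.4 (2).** If `K ⊆ ℝ^d` is nonempty and closed, `(xᵢ) ⊆ K` converges to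
`x ∈ K`, and `T` is a nonempty closed set with `T ∈ Tan(K, xᵢ)` for every `i`, then
`T ∈ Ψ-Tan(K, x)`. -/
theorem stmt6 (d : ℕ) (K : Set (Euc d)) (hKne : K.Nonempty) (hKcl : IsClosed K)
    (x : ℕ → Euc d) (hxK : ∀ i, x i ∈ K)
    (x₀ : Euc d) (hx₀ : x₀ ∈ K) (hlim : Tendsto x atTop (nhds x₀))
    (T : Set (Euc d)) (hTne : T.Nonempty) (hTcl : IsClosed T)
    (hT : ∀ i, T ∈ tangents K (x i)) :
    T ∈ pseudoTangents K x₀ := by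
  classical
  obtain ⟨t₀, ht₀⟩ := hTne
  obtain ⟨k₀, hk₀⟩ := hKne
  have key : ∀ i : ℕ, ∃ s : ℝ, 0 < s ∧ s < 1 / (i + 1) ∧
      exc ((fun z => s⁻¹ • (z - x i)) '' K ∩ closedBall 0 ((i : ℝ) + 1)) T < 1 / (i + 1) ∧
      exc (T ∩ closedBall 0 ((i : ℝ) + 1)) ((fun z => s⁻¹ • (z - x i)) '' K) < 1 / (i + 1) := by
    intro i
    obtain ⟨-, -, r, hrpos, hr0, hAW⟩ := hT i
    have hrad : (0 : ℝ) < (i : ℝ) + 1 := by positivity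
    obtain ⟨h1, h2⟩ := hAW ((i : ℝ) + 1) hrad
    have hε : (0 : ℝ) < 1 / ((i : ℝ) + 1) := by positivity
    have e1 := h1.eventually (gt_mem_nhds hε)
    have e2 := h2.eventually (gt_mem_nhds hε)
    have e3 := hr0.eventually (gt_mem_nhds hε)
    obtain ⟨j, ⟨hj1, hj2⟩, hj3⟩ := ((e1.and e2).and e3).exists
    exact ⟨r j, hrpos j, hj3, hj1, hj2⟩
  choose s hspos hslt hs1 hs2 using key
  refine ⟨⟨t₀, ht₀⟩, hTcl, s, x, hspos, ?_, hxK, hlim, ?_⟩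
  · exact squeeze_zero (fun i => (hspos i).le) (fun i => (hslt i).le)
      tendsto_one_div_add_atTop_nhds_zero_nat
  · intro ρ hρ
    have htend : Tendsto (fun i : ℕ => 1 / ((i : ℝ) + 1)) atTop (nhds 0) :=
      tendsto_one_div_add_atTop_nhds_zero_nat
    have hev : ∀ᶠ i : ℕ in atTop, ρ ≤ (i : ℝ) + 1 := by
      filter_upwards [eventually_ge_atTop ⌈ρ⌉₊] with i hi
      calc ρ ≤ (⌈ρ⌉₊ : ℝ) := Nat.le_ceil ρ
        _ ≤ (i : ℝ) := by exact_mod_cast hi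
        _ ≤ (i : ℝ) + 1 := by linarith
    constructor
    · refine squeeze_zero' (Eventually.of_forall fun i => exc_nonneg _ _) ?_ htend
      filter_upwards [hev] with i hi
      refine le_trans ?_ (hs1 i).le
      refine exc_mono (inter_subset_inter_right _ (closedBall_subset_closedBall hi)) ht₀
        (M := ((i : ℝ) + 1) + dist (0 : Euc d) t₀) ?_
      intro a ⟨_, ha⟩
      calc dist a t₀ ≤ dist a 0 + dist (0 : Euc d) t₀ := dist_triangle _ _ _
        _ ≤ ((i : ℝ) + 1) + dist (0 : Euc d) t₀ := by
            have := mem_closedBall.mp ha; linarith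
    · refine squeeze_zero' (Eventually.of_forall fun i => exc_nonneg _ _) ?_ htend
      filter_upwards [hev] with i hi
      refine le_trans ?_ (hs2 i).le
      have hb₀ : (s i)⁻¹ • (k₀ - x i) ∈ (fun z => (s i)⁻¹ • (z - x i)) '' K :=
        mem_image_of_mem _ hk₀
      refine exc_mono (inter_subset_inter_right _ (closedBall_subset_closedBall hi)) hb₀
        (M := ((i : ℝ) + 1) + dist (0 : Euc d) ((s i)⁻¹ • (k₀ - x i))) ?_
      intro a ⟨_, ha⟩
      calc dist a ((s i)⁻¹ • (k₀ - x i))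
          ≤ dist a 0 + dist (0 : Euc d) ((s i)⁻¹ • (k₀ - x i)) := dist_triangle _ _ _
        _ ≤ ((i : ℝ) + 1) + dist (0 : Euc d) ((s i)⁻¹ • (k₀ - x i)) := by
            have := mem_closedBall.mp ha; linarith
end
end

section
/- Let d ≥ 2, let c ∈ ℝ^d, r > 0, and let p, q be two points on the sphere ∂B(c, r) = {w ∈ ℝ^d : |w − c| = r}. Then there exists a compact connected set J ⊆ ∂B(c, r) containing both p and q with H¹(J) ≤ (π/2)|p − q|. -/
open Set Metric Filter MeasureTheory

noncomputable section

open Real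
open scoped RealInnerProductSpace ENNReal NNReal

-- existence of a unit vector orthogonal to a given one
lemma exists_ortho {d : ℕ} (hd : 2 ≤ d) (a : Euc d) :
    ∃ v : Euc d, ‖v‖ = 1 ∧ ⟪a, v⟫ = 0 := by
  have hne : (ℝ ∙ a)ᗮ ≠ ⊥ := by
    intro h
    have htop : (ℝ ∙ a) = ⊤ := Submodule.orthogonal_eq_bot_iff.mp h
    have h1 : Module.finrank ℝ (ℝ ∙ a) ≤ 1 := by
      simpa using finrank_span_le_card ({a} : Set (Euc d))
    rw [htop] at h1
    simp [finrank_euclideanSpace] at h1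
    omega
  obtain ⟨z, hz, hz0⟩ := Submodule.ne_bot_iff _ |>.mp hne
  refine ⟨‖z‖⁻¹ • z, ?_, ?_⟩
  · rw [norm_smul]; simp [norm_ne_zero_iff.mpr hz0]
  · have := (Submodule.mem_orthogonal _ _).mp hz a (Submodule.mem_span_singleton_self a)
    rw [real_inner_smul_right, this, mul_zero]

lemma norm_combo {d : ℕ} {a v : Euc d} (ha : ‖a‖ = 1) (hv : ‖v‖ = 1) (hav : ⟪a, v⟫ = 0)
    (x y : ℝ) : ‖x • a + y • v‖ ^ 2 = x ^ 2 + y ^ 2 := by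
  rw [norm_add_sq_real, norm_smul, norm_smul, real_inner_smul_left, real_inner_smul_right,
    hav, ha, hv]
  simp [mul_pow, sq_abs]

lemma decomp {d : ℕ} (hd : 2 ≤ d) {a b : Euc d} (ha : ‖a‖ = 1) (hb : ‖b‖ = 1) :
    ∃ v : Euc d, ‖v‖ = 1 ∧ ⟪a, v⟫ = 0 ∧
      b = Real.cos (Real.arccos ⟪a, b⟫) • a + Real.sin (Real.arccos ⟪a, b⟫) • v := by
  set s : ℝ := ⟪a, b⟫ with hs
  have habs : |s| ≤ 1 := by
    have := abs_real_inner_le_norm a b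
    rwa [ha, hb, one_mul] at this
  have hs1 : s ≤ 1 := (abs_le.mp habs).2
  have hsm1 : -1 ≤ s := (abs_le.mp habs).1
  have hcos : Real.cos (Real.arccos s) = s := Real.cos_arccos hsm1 hs1
  have hsin : Real.sin (Real.arccos s) = Real.sqrt (1 - s ^ 2) := Real.sin_arccos s
  have hkey : ‖b - s • a‖ ^ 2 = 1 - s ^ 2 := by
    have hba : ⟪b, a⟫ = s := by rw [hs]; exact real_inner_comm a b
    rw [norm_sub_sq_real, real_inner_smul_right, hba, norm_smul, hb, ha]
    simp [mul_pow, sq_abs]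
    ring
  have hnn : (0:ℝ) ≤ 1 - s ^ 2 := by nlinarith [sq_abs s, abs_nonneg s]
  rcases hnn.eq_or_lt with h0 | hpos
  · obtain ⟨v, hv1, hv2⟩ := exists_ortho hd a
    refine ⟨v, hv1, hv2, ?_⟩
    have hb' : b = s • a := by
      have h2 : ‖b - s • a‖ ^ 2 = 0 := by rw [hkey, ← h0]
      have h3 := pow_eq_zero_iff (n := 2) (by norm_num) |>.mp h2
      rw [norm_eq_zero] at h3
      exact sub_eq_zero.mp h3
    rw [hcos, hsin, ← h0]
    simp [hb']
  · have hsq : ‖b - s • a‖ = Real.sqrt (1 - s ^ 2) := by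
      rw [← hkey]; exact (Real.sqrt_sq (norm_nonneg _)).symm
    have hspos : (0:ℝ) < Real.sqrt (1 - s ^ 2) := Real.sqrt_pos.mpr hpos
    refine ⟨(Real.sqrt (1 - s ^ 2))⁻¹ • (b - s • a), ?_, ?_, ?_⟩
    · rw [norm_smul, hsq, norm_inv, Real.norm_eq_abs, abs_of_nonneg (Real.sqrt_nonneg _),
        inv_mul_cancel₀ (ne_of_gt hspos)]
    · rw [real_inner_smul_right, inner_sub_right, real_inner_smul_right,
        real_inner_self_eq_norm_sq, ha]
      simp [← hs]
    · rw [hcos, hsin, smul_smul, mul_inv_cancel₀ (ne_of_gt hspos)]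
      simp

lemma norm_from_sq {d : ℕ} {x : Euc d} {t : ℝ} (ht : 0 ≤ t) (h : ‖x‖ ^ 2 = t ^ 2) :
    ‖x‖ = t := by
  have := congrArg Real.sqrt h
  rwa [Real.sqrt_sq (norm_nonneg _), Real.sqrt_sq ht] at this

lemma norm_le_from_sq {d : ℕ} {x : Euc d} {t : ℝ} (ht : 0 ≤ t) (h : ‖x‖ ^ 2 ≤ t ^ 2) :
    ‖x‖ ≤ t := by
  have := Real.sqrt_le_sqrt h
  rwa [Real.sqrt_sq (norm_nonneg _), Real.sqrt_sq ht] at this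

set_option maxHeartbeats 2000000 in
theorem stmt11_aux (d : ℕ) (hd : 2 ≤ d) (c : Euc d) (r : ℝ) (hr : 0 < r)
    (p q : Euc d) (hp : p ∈ sphere c r) (hq : q ∈ sphere c r) :
    ∃ J : Set (Euc d), J ⊆ sphere c r ∧ IsCompact J ∧ IsConnected J ∧
      p ∈ J ∧ q ∈ J ∧ μH[1] J ≤ ENNReal.ofReal ((Real.pi / 2) * dist p q) := by
  rw [mem_sphere_iff_norm] at hp hq
  set a : Euc d := r⁻¹ • (p - c) with hadef
  set b : Euc d := r⁻¹ • (q - c) with hbdef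
  have ha : ‖a‖ = 1 := by
    rw [hadef, norm_smul, hp, norm_inv, Real.norm_eq_abs, abs_of_pos hr,
      inv_mul_cancel₀ hr.ne']
  have hb : ‖b‖ = 1 := by
    rw [hbdef, norm_smul, hq, norm_inv, Real.norm_eq_abs, abs_of_pos hr,
      inv_mul_cancel₀ hr.ne']
  have hra : r • a = p - c := by rw [hadef, smul_smul, mul_inv_cancel₀ hr.ne', one_smul]
  have hrb : r • b = q - c := by rw [hbdef, smul_smul, mul_inv_cancel₀ hr.ne', one_smul]
  obtain ⟨v, hv, hav, hbv⟩ := decomp hd ha hb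
  set θ : ℝ := Real.arccos ⟪a, b⟫ with hθdef
  have hθ0 : 0 ≤ θ := Real.arccos_nonneg _
  have hθπ : θ ≤ Real.pi := Real.arccos_le_pi _
  set f : ℝ → Euc d := fun t => c + (r * Real.cos t) • a + (r * Real.sin t) • v with hfdef
  have hfc : ∀ t, f t - c = (r * Real.cos t) • a + (r * Real.sin t) • v := by
    intro t; simp only [hfdef, add_assoc, add_sub_cancel_left]
  have hcont : Continuous f := by
    rw [hfdef]; fun_prop
  -- f maps into the sphere
  have hfs : ∀ t, f t ∈ sphere c r := by
    intro t
    rw [mem_sphere_iff_norm]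
    apply norm_from_sq hr.le
    rw [hfc, norm_combo ha hv hav]
    have := Real.sin_sq_add_cos_sq t
    nlinarith
  -- endpoints
  have hf0 : f 0 = p := by
    rw [hfdef]; simp [hra]
  have hfθ : f θ = q := by
    have : (r * Real.cos θ) • a + (r * Real.sin θ) • v = r • b := by
      rw [hbv]; module
    rw [hfdef]; simp only []
    rw [add_assoc, this, hrb]
    abel
  -- Lipschitz bound
  have hlipd : ∀ t u : ℝ, dist (f t) (f u) ≤ r * dist t u := by
    intro t u
    rw [dist_eq_norm, Real.dist_eq]
    have hsub : f t - f u = (r * (Real.cos t - Real.cos u)) • a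
        + (r * (Real.sin t - Real.sin u)) • v := by
      rw [hfdef]
      simp only [mul_sub, sub_smul]
      abel
    apply norm_le_from_sq (by positivity)
    rw [hsub, norm_combo ha hv hav]
    have hcs : Real.cos t * Real.cos u + Real.sin t * Real.sin u = Real.cos (t - u) :=
      (Real.cos_sub t u).symm
    have h1 : Real.sin ((t - u) / 2) ^ 2 ≤ ((t - u) / 2) ^ 2 := Real.sin_sq_le_sq
    have h2 : Real.sin ((t - u) / 2) ^ 2 = 1 / 2 - Real.cos (t - u) / 2 := by
      have := Real.sin_sq_eq_half_sub ((t - u) / 2)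
      rwa [mul_div_cancel₀ _ (two_ne_zero)] at this
    have ht2 := Real.sin_sq_add_cos_sq t
    have hu2 := Real.sin_sq_add_cos_sq u
    have he : (Real.cos t - Real.cos u) ^ 2 + (Real.sin t - Real.sin u) ^ 2
        = 2 - 2 * Real.cos (t - u) := by linear_combination ht2 + hu2 - 2 * hcs
    have hXY : (Real.cos t - Real.cos u) ^ 2 + (Real.sin t - Real.sin u) ^ 2 ≤ (t - u) ^ 2 := by
      rw [he]; nlinarith [h1, h2]
    simp only [mul_pow, sq_abs]
    nlinarith [mul_le_mul_of_nonneg_left hXY (sq_nonneg r)]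
  have hlip : LipschitzWith r.toNNReal f := by
    apply LipschitzWith.of_dist_le_mul
    intro t u
    rw [Real.coe_toNNReal r hr.le]
    exact hlipd t u
  refine ⟨f '' Icc 0 θ, ?_, ?_, ?_, ?_, ?_, ?_⟩
  · rintro x ⟨t, -, rfl⟩; exact hfs t
  · exact (isCompact_Icc).image hcont
  · exact (isConnected_Icc hθ0).image f hcont.continuousOn
  · exact ⟨0, ⟨le_refl 0, hθ0⟩, hf0⟩
  · exact ⟨θ, ⟨hθ0, le_refl θ⟩, hfθ⟩
  · -- measure bound
    have hmeas := (hlip.lipschitzOnWith (s := Icc 0 θ)).hausdorffMeasure_image_le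
      (le_of_lt one_pos)
    have hIcc : μH[(1:ℝ)] (Icc (0:ℝ) θ) = ENNReal.ofReal θ := by
      rw [MeasureTheory.hausdorffMeasure_real, Real.volume_Icc, sub_zero]
    rw [hIcc] at hmeas
    refine le_trans hmeas ?_
    have hcoe : ((r.toNNReal : ℝ≥0∞) : ℝ≥0∞) ^ (1:ℝ) * ENNReal.ofReal θ
        = ENNReal.ofReal (r * θ) := by
      rw [ENNReal.rpow_one, ENNReal.ofReal_mul hr.le]; rfl
    rw [hcoe]
    apply ENNReal.ofReal_le_ofReal
    -- chord length
    have hdist : dist p q = r * (2 * Real.sin (θ / 2)) := by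
      rw [dist_eq_norm]
      have hpq : p - q = r • (a - b) := by rw [smul_sub, hra, hrb]; abel
      rw [hpq, norm_smul, Real.norm_eq_abs, abs_of_pos hr]
      congr 1
      have hsin2 : 0 ≤ Real.sin (θ / 2) := Real.sin_nonneg_of_nonneg_of_le_pi
        (by linarith) (by linarith [Real.pi_pos])
      apply norm_from_sq (by linarith)
      rw [norm_sub_sq_real, ha, hb]
      have hcos : ⟪a, b⟫ = Real.cos θ := by
        rw [hθdef, Real.cos_arccos]
        · have := abs_real_inner_le_norm a b
          rw [ha, hb, one_mul] at this
          linarith [(abs_le.mp this).1]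
        · have := abs_real_inner_le_norm a b
          rw [ha, hb, one_mul] at this
          linarith [(abs_le.mp this).2]
      have h2 : Real.sin (θ / 2) ^ 2 = 1 / 2 - Real.cos θ / 2 := by
        have := Real.sin_sq_eq_half_sub (θ / 2)
        rwa [mul_div_cancel₀ _ (two_ne_zero)] at this
      rw [hcos]
      nlinarith
    rw [hdist]
    have hjordan : θ ≤ Real.pi * Real.sin (θ / 2) := by
      have h1 := Real.mul_le_sin (x := θ / 2) (by linarith) (by linarith)
      have hπ := Real.pi_pos
      have h2 := mul_le_mul_of_nonneg_left h1 hπ.le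
      have heq : Real.pi * (2 / Real.pi * (θ / 2)) = θ := by field_simp
      linarith
    nlinarith [Real.pi_pos]

/-- **Geodesic arcs on spheres.** For `d ≥ 2`, any two points `p, q` on a sphere
`∂B(c, r)` in `ℝ^d` can be joined by a compact connected subset `J` of the sphere
with `H¹(J) ≤ (π/2)·|p - q|`. -/
theorem stmt11 (d : ℕ) (hd : 2 ≤ d) (c : Euc d) (r : ℝ) (hr : 0 < r)
    (p q : Euc d) (hp : p ∈ sphere c r) (hq : q ∈ sphere c r) :
    ∃ J : Set (Euc d), J ⊆ sphere c r ∧ IsCompact J ∧ IsConnected J ∧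
      p ∈ J ∧ q ∈ J ∧ μH[1] J ≤ ENNReal.ofReal ((Real.pi / 2) * dist p q) := by
  exact stmt11_aux d hd c r hr p q hp hq
end
end
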